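/- Let A(x) = Σ_{ν=0}^n α_ν x^{p^ν} ∈ K_∞[x] be an additive polynomial. Then for all ξ ∈ K_∞, one has e(A(ξ)) = e(τ(A)·ξ), where τ(A) = Σ_{ν=0}^n ψ^ν(α_ν). -/

import Mathlib

open Polynomial

noncomputable section

/-- The field `K_∞ = F_q((1/t))`, modelled as Laurent series in `X = 1/t`. -/
abbrev Kinf (Fq : Type) [Field Fq] := LaurentSeries Fq

/-- The embedding of the polynomial ring `F_q[t]` into `K_∞`, sending `t` to `X⁻¹`,
i.e. to the Laurent series with a single coefficient `1` in degree `-1`. -/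
def polyToK (Fq : Type) [Field Fq] : Polynomial Fq →+* Kinf Fq :=
  Polynomial.eval₂RingHom (HahnSeries.C : Fq →+* Kinf Fq) (HahnSeries.single (-1 : ℤ) 1)

/-- `α ∈ K_∞` is irrational if it is not a ratio `g/h` with `g, h ∈ F_q[t]`, `h ≠ 0`. -/
def IrrationalK (Fq : Type) [Field Fq] (α : Kinf Fq) : Prop :=
  ¬ ∃ g h : Polynomial Fq, h ≠ 0 ∧ α = polyToK Fq g / polyToK Fq h

/-- Equidistribution in `𝕋`, in the cylinder-set form of Carlitz's definition: for every
`M ≥ 1` and every tuple `(c_1, …, c_M)` of elements of `F_q`, the proportion of `u` with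
`ord u < N` whose value `s u` has coefficient `c_i` at `t^{-i}` for `1 ≤ i ≤ M`
(the coefficient of `t^{-i}` being the `HahnSeries` coefficient at `i`) tends to `q^{-M}`. -/
def Equidistributed (Fq : Type) [Field Fq] [Fintype Fq]
    (s : Polynomial Fq → Kinf Fq) : Prop :=
  ∀ M : ℕ, 1 ≤ M → ∀ c : Fin M → Fq,
    Filter.Tendsto
      (fun N : ℕ =>
        (Nat.card {u : Polynomial Fq //
            u.degree < (N : ℕ) ∧ ∀ i : Fin M, (s u).coeff ((i : ℤ) + 1) = c i} : ℝ)
          / (Fintype.card Fq : ℝ) ^ N)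
      Filter.atTop (nhds (((Fintype.card Fq : ℝ) ^ M)⁻¹))

/-- The finset of polynomials `u ∈ F_q[t]` with `ord u = deg u < N`. -/
def polysDegLT (Fq : Type) [Field Fq] [Fintype Fq] (N : ℕ) : Finset (Polynomial Fq) :=
  letI := Classical.decEq (Polynomial Fq)
  Finset.image
    (fun c : Fin N → Fq => ∑ i : Fin N, Polynomial.C (c i) * Polynomial.X ^ (i : ℕ))
    Finset.univ

/-- The trace map `tr : F_q → F_p`. -/
def trFq (p : ℕ) (Fq : Type) [Field Fq] [CharP Fq p] (a : Fq) : ZMod p :=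
  letI := ZMod.algebra Fq p
  Algebra.trace (ZMod p) Fq a

/-- The additive character `e : K_∞ → ℂ`, `e(α) = exp(2πi·tr(res α)/p)`, where
`res α` is the coefficient of `t^{-1}` in `α`. -/
def eChar (p : ℕ) (Fq : Type) [Field Fq] [CharP Fq p] (α : Kinf Fq) : ℂ :=
  Complex.exp (2 * Real.pi * Complex.I * ((trFq p Fq (α.coeff 1)).val : ℂ) / p)

/-- The map `ψ_l : K_∞ → K_∞`, `ψ_l(Σ_i a_i t^i) = Σ_j a_{pj+l}^{1/p} t^j`, where
`b ↦ b^{1/p} = b^{p^{m-1}}` inverts the Frobenius on `F_q` (`q = p^m`).  In terms of the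
`HahnSeries` (i.e. `X = 1/t`) coefficients, the coefficient of `ψ_l α` at `n` is
`(α.coeff (p*n - l))^(p^(m-1))`. -/
def psiL (p m : ℕ) [Fact p.Prime] (Fq : Type) [Field Fq] (l : ℤ) (α : Kinf Fq) : Kinf Fq where
  coeff := fun n => (α.coeff ((p : ℤ) * n - l)) ^ (p ^ (m - 1))
  isPWO_support' := by
    have hp : (0 : ℤ) < (p : ℤ) := by exact_mod_cast (Fact.out : p.Prime).pos
    have hsub : (Function.support fun n : ℤ =>
        (α.coeff ((p : ℤ) * n - l)) ^ (p ^ (m - 1))) ⊆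
        (fun i : ℤ => (i + l) / (p : ℤ)) '' α.support := by
      intro n hn
      have hne : α.coeff ((p : ℤ) * n - l) ≠ 0 := by
        intro h0
        apply hn
        simp only [Function.mem_support, ne_eq, not_not]
        rw [h0]
        exact zero_pow (pow_ne_zero _ (Fact.out : p.Prime).ne_zero)
      refine ⟨(p : ℤ) * n - l, hne, ?_⟩
      show ((p : ℤ) * n - l + l) / (p : ℤ) = n
      rw [sub_add_cancel, Int.mul_ediv_cancel_left _ (ne_of_gt hp)]
    exact ((α.isPWO_support).image_of_monotone
      (fun a b hab => Int.ediv_le_ediv hp (by omega))).mono hsub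

/-- The map `ψ = ψ_{p-1}` satisfying `e(α ξ^p) = e(ψ(α) ξ)`. -/
def psiK (p m : ℕ) [Fact p.Prime] (Fq : Type) [Field Fq] (α : Kinf Fq) : Kinf Fq :=
  psiL p m Fq ((p : ℤ) - 1) α

/-- A polynomial `A ∈ K_∞[x]` is additive if `A(x+y) = A(x) + A(y)` in `K_∞[x,y]`
(modelled as `K_∞[x][y]`, with `x = C X` and `y = X`). -/
def IsAdditive (Fq : Type) [Field Fq] (A : Polynomial (Kinf Fq)) : Prop :=
  A.eval₂ ((Polynomial.C).comp (Polynomial.C)) (Polynomial.C Polynomial.X + Polynomial.X) =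
    A.eval₂ ((Polynomial.C).comp (Polynomial.C)) (Polynomial.C Polynomial.X) +
      A.eval₂ ((Polynomial.C).comp (Polynomial.C)) (Polynomial.X :
        Polynomial (Polynomial (Kinf Fq)))

/-- The map `τ`: for an additive polynomial `A(x) = Σ_ν α_ν x^{p^ν}` one has
`τ(A) = Σ_ν ψ^ν(α_ν)`. -/
def tauK (p m : ℕ) [Fact p.Prime] (Fq : Type) [Field Fq] (A : Polynomial (Kinf Fq)) :
    Kinf Fq :=
  ∑ ν ∈ Finset.range (A.natDegree + 1), (psiK p m Fq)^[ν] (A.coeff (p ^ ν))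

end



section StatementSevenAux


lemma mySum_coeff {Fq : Type} [Field Fq] {ι : Type} (s : Finset ι) (f : ι → HahnSeries ℤ Fq)
    (g : ℤ) : (∑ i ∈ s, f i).coeff g = ∑ i ∈ s, (f i).coeff g := by
  classical
  induction s using Finset.cons_induction with
  | empty => simp
  | cons a s ha ih => rw [Finset.sum_cons, Finset.sum_cons, HahnSeries.coeff_add, ih]

set_option maxHeartbeats 1000000 in
lemma key_trunc (p : ℕ) [Fact p.Prime] (Fq : Type) [Field Fq] [CharP Fq p]
    (ξ : HahnSeries ℤ Fq) (g : ℤ) (M : ℤ) (hg : g < (p : ℤ) * (M + 1)) :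
    ∃ (S : Finset ℤ), (∀ i ∈ S, i ≤ M) ∧ (∀ j : ℤ, j ≤ M → ξ.coeff j ≠ 0 → j ∈ S) ∧
      (ξ ^ p).coeff g = ∑ i ∈ S, (HahnSeries.single ((p : ℤ) * i) ((ξ.coeff i) ^ p)).coeff g := by
  letI : CharP (HahnSeries ℤ Fq) p := charP_of_injective_ringHom (HahnSeries.C_injective) p
  have hp1 : 1 ≤ p := (Fact.out : p.Prime).one_lt.le
  set u : HahnSeries ℤ Fq :=
    ⟨fun i => if i ≤ M then ξ.coeff i else 0, by
      refine Set.IsPWO.mono ξ.isPWO_support ?_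
      intro i hi
      simp only [Function.mem_support, ne_eq] at hi
      by_cases h : i ≤ M <;> simp_all⟩ with hu
  have hucoeff : ∀ i, u.coeff i = if i ≤ M then ξ.coeff i else 0 := fun i => rfl
  set v : HahnSeries ℤ Fq := ξ - u with hv
  have hvcoeff : ∀ i, i ≤ M → v.coeff i = 0 := by
    intro i hi
    rw [hv, HahnSeries.coeff_sub, hucoeff, if_pos hi, sub_self]
  have hufin : u.support.Finite := by
    by_cases hξ : ξ = 0
    · have : u = 0 := by
        ext i; rw [hucoeff, hξ]; simp
      rw [this]; simp
    · apply Set.Finite.subset (Set.finite_Icc ξ.order M)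
      intro i hi
      have hi' : u.coeff i ≠ 0 := hi
      rw [hucoeff] at hi'
      by_cases h : i ≤ M
      · rw [if_pos h] at hi'
        refine ⟨?_, h⟩
        by_contra hlt
        exact hi' (HahnSeries.coeff_eq_zero_of_lt_order (lt_of_not_ge hlt))
      · rw [if_neg h] at hi'; exact absurd rfl hi'
  refine ⟨hufin.toFinset, ?_, ?_, ?_⟩
  · intro i hi
    rw [Set.Finite.mem_toFinset] at hi
    have hi' : u.coeff i ≠ 0 := hi
    rw [hucoeff] at hi'
    by_contra h; rw [if_neg h] at hi'; exact hi' rfl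
  · intro j hj hne
    rw [Set.Finite.mem_toFinset]
    show u.coeff j ≠ 0
    rw [hucoeff, if_pos hj]
    exact hne
  · have hxuv : ξ = u + v := by rw [hv]; ring
    have hsplit : (ξ ^ p).coeff g = (u ^ p).coeff g + (v ^ p).coeff g := by
      rw [hxuv, add_pow_char, HahnSeries.coeff_add]
    have hvsupp : ∀ k : ℕ, (v ^ (k + 1)).support ⊆ {x : ℤ | (k + 1 : ℤ) * (M + 1) ≤ x} := by
      intro k
      induction k with
      | zero =>
        intro x hx
        rw [pow_one] at hx
        have hx' : v.coeff x ≠ 0 := hx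
        simp only [Set.mem_setOf_eq]
        push_cast
        rw [one_mul]
        by_contra h
        exact hx' (hvcoeff x (by omega))
      | succ k ih =>
        intro x hx
        have := HahnSeries.support_mul_subset (x := v ^ (k+1)) (y := v)
          (pow_succ v (k+1) ▸ hx)
        obtain ⟨a, ha, b, hb, rfl⟩ := this
        have hb' : M + 1 ≤ b := by
          by_contra h
          exact (HahnSeries.mem_support _ _).mp hb (hvcoeff b (by omega))
        have := ih ha
        simp only [Set.mem_setOf_eq] at this ⊢
        push_cast
        push_cast at this
        nlinarith [hb']
    have hvg : (v ^ p).coeff g = 0 := by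
      by_contra h
      have hmem : g ∈ (v ^ p).support := h
      obtain ⟨k, hk⟩ : ∃ k, p = k + 1 := ⟨p - 1, by omega⟩
      rw [hk] at hmem
      have := hvsupp k hmem
      simp only [Set.mem_setOf_eq] at this
      rw [hk] at hg
      push_cast at hg this
      linarith
    have husum : u = ∑ i ∈ hufin.toFinset, HahnSeries.single i (u.coeff i) := by
      ext j
      rw [mySum_coeff]
      rw [Finset.sum_eq_single j]
      · simp
      · intro b _ hbj; rw [HahnSeries.coeff_single_of_ne (by omega)]
      · intro hj
        rw [Set.Finite.mem_toFinset, HahnSeries.mem_support, not_not] at hj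
        rw [HahnSeries.coeff_single_same]; exact hj
    have hupow : (u ^ p).coeff g
        = ∑ i ∈ hufin.toFinset, (HahnSeries.single ((p:ℤ) * i) ((u.coeff i) ^ p)).coeff g := by
      conv_lhs => rw [husum]
      rw [sum_pow_char, mySum_coeff]
      apply Finset.sum_congr rfl
      intro i _
      rw [HahnSeries.single_pow, nsmul_eq_mul]
    rw [hsplit, hvg, add_zero, hupow]
    apply Finset.sum_congr rfl
    intro i hi
    rw [Set.Finite.mem_toFinset] at hi
    have hi' : u.coeff i ≠ 0 := hi
    rw [hucoeff] at hi'
    have hiM : i ≤ M := by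
      by_contra h
      rw [if_neg h] at hi'; exact hi' rfl
    congr 2
    rw [hucoeff, if_pos hiM]

lemma coeff_pow_char_mul (p : ℕ) [Fact p.Prime] (Fq : Type) [Field Fq] [CharP Fq p]
    (ξ : HahnSeries ℤ Fq) (j : ℤ) : (ξ ^ p).coeff ((p : ℤ) * j) = (ξ.coeff j) ^ p := by
  have hp0 : (0 : ℤ) < (p : ℤ) := by exact_mod_cast (Fact.out : p.Prime).pos
  obtain ⟨S, hS1, hS2, hS3⟩ := key_trunc p Fq ξ ((p : ℤ) * j) j
    (by nlinarith)
  rw [hS3, Finset.sum_eq_single j]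
  · by_cases hj : j ∈ S
    · rw [HahnSeries.coeff_single_same]
    · have : ξ.coeff j = 0 := by
        by_contra h
        exact hj (hS2 j le_rfl h)
      rw [this, zero_pow (Fact.out : p.Prime).ne_zero, HahnSeries.coeff_single]
      simp
  · intro b _ hbj
    rw [HahnSeries.coeff_single_of_ne]
    intro h
    exact hbj (mul_left_cancel₀ (ne_of_gt hp0) h.symm)
  · intro hj
    have : ξ.coeff j = 0 := by
      by_contra h
      exact hj (hS2 j le_rfl h)
    rw [this, zero_pow (Fact.out : p.Prime).ne_zero, HahnSeries.coeff_single]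
    simp
  -- handles membership either way
lemma coeff_pow_char_not_dvd (p : ℕ) [Fact p.Prime] (Fq : Type) [Field Fq] [CharP Fq p]
    (ξ : HahnSeries ℤ Fq) (g : ℤ) (h : ¬ ((p : ℤ) ∣ g)) : (ξ ^ p).coeff g = 0 := by
  have hp0 : (0 : ℤ) < (p : ℤ) := by exact_mod_cast (Fact.out : p.Prime).pos
  obtain ⟨S, hS1, hS2, hS3⟩ := key_trunc p Fq ξ g |g|
    (by nlinarith [abs_nonneg g, le_abs_self g])
  rw [hS3]
  apply Finset.sum_eq_zero
  intro i _
  rw [HahnSeries.coeff_single_of_ne]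
  intro hc
  exact h ⟨i, hc⟩

lemma trFq_pow_p (p : ℕ) [Fact p.Prime] (Fq : Type) [Field Fq] [Fintype Fq] [CharP Fq p]
    (a : Fq) : trFq p Fq (a ^ p) = trFq p Fq a := by
  letI := ZMod.algebra Fq p
  let e : Fq ≃ₐ[ZMod p] Fq :=
    { frobeniusEquiv Fq p with
      commutes' := fun c => by
        show (algebraMap (ZMod p) Fq c) ^ p = algebraMap (ZMod p) Fq c
        rw [← map_pow, ZMod.pow_card] }
  have := Algebra.trace_eq_of_algEquiv e a
  show (Algebra.trace (ZMod p) Fq) (a ^ p) = (Algebra.trace (ZMod p) Fq) a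
  simpa [e, frobeniusEquiv_def, frobenius_def] using this

lemma trFq_add (p : ℕ) [Fact p.Prime] (Fq : Type) [Field Fq] [Fintype Fq] [CharP Fq p]
    (a b : Fq) : trFq p Fq (a + b) = trFq p Fq a + trFq p Fq b := by
  letI := ZMod.algebra Fq p
  show (Algebra.trace (ZMod p) Fq) (a + b) = _
  rw [map_add]
  rfl

lemma trFq_sum (p : ℕ) [Fact p.Prime] (Fq : Type) [Field Fq] [Fintype Fq] [CharP Fq p]
    {ι : Type} (s : Finset ι) (f : ι → Fq) :
    trFq p Fq (∑ i ∈ s, f i) = ∑ i ∈ s, trFq p Fq (f i) := by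
  letI := ZMod.algebra Fq p
  show (Algebra.trace (ZMod p) Fq) (∑ i ∈ s, f i) = _
  rw [map_sum]
  rfl

section
variable (p m : ℕ) [Fact p.Prime] (Fq : Type) [Field Fq] [Fintype Fq] [CharP Fq p]

lemma res_step (hm : m ≠ 0) (hq : Fintype.card Fq = p ^ m) (α ξ : Kinf Fq) :
    trFq p Fq ((α * ξ ^ p).coeff 1) = trFq p Fq ((psiK p m Fq α * ξ).coeff 1) := by
  have hpprime : p.Prime := Fact.out
  have hp0 : (0 : ℤ) < (p : ℤ) := by exact_mod_cast hpprime.pos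
  have hpsi : ∀ n : ℤ, (psiK p m Fq α).coeff n
      = (α.coeff ((p : ℤ) * n - ((p : ℤ) - 1))) ^ (p ^ (m - 1)) := fun n => rfl
  have hdvd : ∀ j : ℤ, (ξ ^ p).coeff j ≠ 0 → (p : ℤ) ∣ j := by
    intro j h
    by_contra hc
    exact h (coeff_pow_char_not_dvd p Fq ξ j hc)
  have hcancel : ∀ j' : ℤ, ((p : ℤ) * j') / (p : ℤ) = j' := fun j' =>
    Int.mul_ediv_cancel_left _ (ne_of_gt hp0)
  rw [HahnSeries.coeff_mul, HahnSeries.coeff_mul, trFq_sum, trFq_sum]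
  refine Finset.sum_nbij' (i := fun ij : ℤ × ℤ => ((1 : ℤ) - ij.2 / p, ij.2 / p))
    (j := fun ij : ℤ × ℤ => ((1 : ℤ) - (p : ℤ) * ij.2, (p : ℤ) * ij.2)) ?_ ?_ ?_ ?_ ?_
  · rintro ⟨a, b⟩ hab
    rw [Finset.mem_addAntidiagonal] at hab ⊢
    obtain ⟨ha, hb, hsum⟩ := hab
    obtain ⟨b', rfl⟩ := hdvd b hb
    simp only [hcancel]
    have ha' : a = 1 - (p : ℤ) * b' := by omega
    refine ⟨?_, ?_, by ring⟩
    · show (psiK p m Fq α).coeff _ ≠ 0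
      rw [hpsi]
      have : (p : ℤ) * (1 - b') - ((p : ℤ) - 1) = a := by rw [ha']; ring
      rw [this]
      exact pow_ne_zero _ ha
    · show ξ.coeff b' ≠ 0
      intro h0
      apply hb
      rw [coeff_pow_char_mul p Fq ξ b', h0, zero_pow hpprime.ne_zero]
  · rintro ⟨a, b⟩ hab
    rw [Finset.mem_addAntidiagonal] at hab ⊢
    obtain ⟨ha, hb, hsum⟩ := hab
    have ha' : a = 1 - b := by omega
    refine ⟨?_, ?_, by ring⟩
    · show α.coeff _ ≠ 0
      have h2 : (psiK p m Fq α).coeff a ≠ 0 := ha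
      rw [hpsi] at h2
      have h3 : α.coeff ((p : ℤ) * a - ((p : ℤ) - 1)) ≠ 0 := by
        intro h0
        rw [h0, zero_pow (pow_ne_zero _ hpprime.ne_zero)] at h2
        exact h2 rfl
      have : (p : ℤ) * a - ((p : ℤ) - 1) = 1 - (p : ℤ) * b := by rw [ha']; ring
      rwa [this] at h3
    · show (ξ ^ p).coeff _ ≠ 0
      rw [coeff_pow_char_mul p Fq ξ b]
      exact pow_ne_zero _ hb
  · rintro ⟨a, b⟩ hab
    rw [Finset.mem_addAntidiagonal] at hab
    obtain ⟨ha, hb, hsum⟩ := hab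
    obtain ⟨b', rfl⟩ := hdvd b hb
    simp only [hcancel]
    have : a = 1 - (p : ℤ) * b' := by omega
    simp [this]
  · rintro ⟨a, b⟩ hab
    rw [Finset.mem_addAntidiagonal] at hab
    obtain ⟨ha, hb, hsum⟩ := hab
    simp only [hcancel]
    have : a = 1 - b := by omega
    simp [this]
  · rintro ⟨a, b⟩ hab
    rw [Finset.mem_addAntidiagonal] at hab
    obtain ⟨ha, hb, hsum⟩ := hab
    obtain ⟨b', rfl⟩ := hdvd b hb
    simp only [hcancel]
    rw [coeff_pow_char_mul p Fq ξ b', hpsi]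
    have ha' : a = 1 - (p : ℤ) * b' := by omega
    have h1 : (p : ℤ) * (1 - b') - ((p : ℤ) - 1) = a := by rw [ha']; ring
    rw [h1]
    have h2 : α.coeff a * ξ.coeff b' ^ p = (α.coeff a ^ p ^ (m - 1) * ξ.coeff b') ^ p := by
      rw [mul_pow, ← pow_mul, ← pow_succ, Nat.sub_add_cancel (Nat.one_le_iff_ne_zero.mpr hm),
        ← hq, FiniteField.pow_card]
    rw [h2, trFq_pow_p]

lemma eChar_zeta (α : Kinf Fq) :
    eChar p Fq α = Complex.exp (2 * Real.pi * Complex.I / p) ^ (trFq p Fq (α.coeff 1)).val := by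
  rw [eChar, ← Complex.exp_nat_mul]
  congr 1
  ring

lemma zeta_pow_p : Complex.exp (2 * Real.pi * Complex.I / p) ^ p = 1 := by
  have hp0 : (p : ℂ) ≠ 0 := by
    exact_mod_cast (Fact.out : p.Prime).ne_zero
  rw [← Complex.exp_nat_mul]
  rw [show (p : ℂ) * (2 * Real.pi * Complex.I / p) = 2 * Real.pi * Complex.I by
    field_simp]
  exact Complex.exp_two_pi_mul_I

lemma zeta_pow_mod (a : ℕ) :
    Complex.exp (2 * Real.pi * Complex.I / p) ^ (a % p)
      = Complex.exp (2 * Real.pi * Complex.I / p) ^ a := by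
  conv_rhs => rw [← Nat.div_add_mod a p]
  rw [pow_add, pow_mul, zeta_pow_p, one_pow, one_mul]

lemma eChar_add (α β : Kinf Fq) :
    eChar p Fq (α + β) = eChar p Fq α * eChar p Fq β := by
  haveI : NeZero p := ⟨(Fact.out : p.Prime).ne_zero⟩
  rw [eChar_zeta, eChar_zeta, eChar_zeta, HahnSeries.coeff_add, trFq_add, ZMod.val_add,
    zeta_pow_mod, pow_add]

lemma eChar_zero : eChar p Fq 0 = 1 := by
  rw [eChar_zeta]
  have : (0 : Kinf Fq).coeff 1 = 0 := rfl
  rw [this]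
  have h0 : trFq p Fq 0 = 0 := by
    letI := ZMod.algebra Fq p
    show (Algebra.trace (ZMod p) Fq) 0 = 0
    rw [map_zero]
  rw [h0, ZMod.val_zero, pow_zero]

lemma eChar_sum {ι : Type} (s : Finset ι) (f : ι → Kinf Fq) :
    eChar p Fq (∑ i ∈ s, f i) = ∏ i ∈ s, eChar p Fq (f i) := by
  classical
  induction s using Finset.cons_induction with
  | empty => simpa using eChar_zero p Fq
  | cons a s ha ih => rw [Finset.sum_cons, Finset.prod_cons, eChar_add, ih]

lemma eChar_step (hm : m ≠ 0) (hq : Fintype.card Fq = p ^ m) (α ξ : Kinf Fq) :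
    eChar p Fq (α * ξ ^ p) = eChar p Fq (psiK p m Fq α * ξ) := by
  rw [eChar, eChar, res_step p m Fq hm hq α ξ]

lemma eChar_iter (hm : m ≠ 0) (hq : Fintype.card Fq = p ^ m) (ν : ℕ) (α ξ : Kinf Fq) :
    eChar p Fq (α * ξ ^ (p ^ ν)) = eChar p Fq ((psiK p m Fq)^[ν] α * ξ) := by
  induction ν generalizing α ξ with
  | zero => simp
  | succ ν ih =>
    have h1 : ξ ^ (p ^ (ν + 1)) = (ξ ^ (p ^ ν)) ^ p := by
      rw [← pow_mul, pow_succ]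
    rw [h1, eChar_step p m Fq hm hq α (ξ ^ (p ^ ν)), ih (psiK p m Fq α) ξ,
      Function.iterate_succ_apply]
end

end StatementSevenAux

/-- relation (3.4).  For an additive polynomial
`A(x) = Σ_{ν=0}^n α_ν x^{p^ν}` and all `ξ ∈ K_∞`, one has `e(A(ξ)) = e(τ(A) ξ)` with
`τ(A) = Σ_{ν=0}^n ψ^ν(α_ν)`. -/
theorem statement7 (p m : ℕ) [Fact p.Prime] (hm : m ≠ 0)
    (Fq : Type) [Field Fq] [Fintype Fq] [CharP Fq p] (hq : Fintype.card Fq = p ^ m)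
    (n : ℕ) (α : ℕ → Kinf Fq)
    (A : Polynomial (Kinf Fq))
    (hA : A = ∑ ν ∈ Finset.range (n + 1), Polynomial.C (α ν) * Polynomial.X ^ (p ^ ν))
    (hadd : IsAdditive Fq A)
    (ξ : Kinf Fq) :
    eChar p Fq (A.eval ξ) =
      eChar p Fq ((∑ ν ∈ Finset.range (n + 1), (psiK p m Fq)^[ν] (α ν)) * ξ) := by
  have hAeval : A.eval ξ = ∑ ν ∈ Finset.range (n + 1), α ν * ξ ^ (p ^ ν) := by
    rw [hA, Polynomial.eval_finset_sum]
    simp [Polynomial.eval_mul, Polynomial.eval_pow]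
  rw [hAeval, eChar_sum, Finset.sum_mul, eChar_sum]
  apply Finset.prod_congr rfl
  intro ν _
  exact eChar_iter p m Fq hm hq ν (α ν) ξ
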